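/- arXiv:2410.20830 — 3 statements merged into one kernel-verified Lean document; each statement's English description precedes it below -/
import Mathlib

section
/- Let k ≥ 2 and let T be a k-uniform hypertree with m ≥ 1 edges and n = m(k−1)+1 vertices, and fix a vertex v₀ of T. Then the number of vectors x ∈ (ℤ/kℤ)^n satisfying ∑_{v∈e} x_v = 0 in ℤ/kℤ for every edge e of T (i.e., B_T x = 0 over ℤ/kℤ) and x_{v₀} = 0 is exactly k^{m(k−2)}. -/
open Finset

/-!
The vertex `v₀` together with the edge sums gives an additive map `(ℤ/kℤ)^n → (ℤ/kℤ)^(m+1)`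
whose kernel is the solution set. It is surjective: in the tree order every edge `e_j` has a
vertex outside the earlier edges, so the edge sums can be prescribed one edge at a time by
adjusting that vertex, and afterwards adding a constant to all coordinates fixes `x_{v₀}`
without changing any edge sum, because every edge has `k = 0` vertices in `ℤ/kℤ`.
Hence the kernel has `k^n / k^(m+1) = k^(m(k-2))` elements.
-/

theorem AddMonoidHom.card_ker_mul_card_of_surjective {G H : Type*} [AddGroup G] [AddGroup H]
    (f : G →+ H) (hf : Function.Surjective f) : Nat.card f.ker * Nat.card H = Nat.card G := by
  rw [← f.ker.card_mul_index, AddSubgroup.index_ker, f.range_eq_top_of_surjective hf,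
    AddSubgroup.card_top]

section EdgeSums

variable {α ι R : Type*}

@[simps]
def edgeSums [AddCommMonoid R] (e : ι → Finset α) : (α → R) →+ (ι → R) where
  toFun x j := ∑ v ∈ e j, x v
  map_zero' := by ext; simp
  map_add' x y := by ext; simp [sum_add_distrib]

theorem edgeSums_surjective_of_triangular [AddCommGroup R] [DecidableEq α] {m : ℕ}
    (e : Fin m → Finset α) (d : Fin m → α) (hd : ∀ j, d j ∈ e j)
    (hd_notMem : ∀ j, ∀ i < j, d j ∉ e i) :
    Function.Surjective (edgeSums (R := R) e) := by
  intro t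
  suffices h : ∀ s ≤ m, ∃ x : α → R, ∀ j : Fin m, (j : ℕ) < s → ∑ v ∈ e j, x v = t j by
    obtain ⟨x, hx⟩ := h m le_rfl
    exact ⟨x, funext fun j => hx j j.isLt⟩
  intro s
  induction s with
  | zero => exact fun _ => ⟨0, fun _ hj => absurd hj (Nat.not_lt_zero _)⟩
  | succ s ih =>
    intro hs
    obtain ⟨x, hx⟩ := ih (s.le_succ.trans hs)
    let i : Fin m := ⟨s, hs⟩
    refine ⟨x + Pi.single (d i) (t i - ∑ v ∈ e i, x v), fun j hj => ?_⟩
    simp only [Pi.add_apply, sum_add_distrib, sum_pi_single']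
    rcases (Nat.lt_succ_iff.mp hj).lt_or_eq with hlt | heq
    · rw [if_neg (hd_notMem i j hlt), add_zero, hx j hlt]
    · rw [show j = i from Fin.ext heq, if_pos (hd i), add_sub_cancel]

theorem edgeSums_prod_eval_surjective [Ring R] [DecidableEq α] {m : ℕ}
    (e : Fin m → Finset α) (hcard : ∀ j, ((e j).card : R) = 0) (d : Fin m → α)
    (hd : ∀ j, d j ∈ e j) (hd_notMem : ∀ j, ∀ i < j, d j ∉ e i) (v₀ : α) :
    Function.Surjective ((edgeSums (R := R) e).prod (Pi.evalAddMonoidHom (fun _ => R) v₀)) := by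
  rintro ⟨t, c⟩
  obtain ⟨x, rfl⟩ := edgeSums_surjective_of_triangular (R := R) e d hd hd_notMem t
  refine ⟨x + fun _ => c - x v₀, ?_⟩
  ext j
  · simp [hcard]
  · simp

end EdgeSums

theorem Finset.exists_mem_forall_notMem_of_card_inter_biUnion_le_one {α : Type*}
    [DecidableEq α] {m : ℕ} (e : Fin m → Finset α) (hcard : ∀ j, 2 ≤ (e j).card)
    (htree : ∀ j : Fin m, 0 < (j : ℕ) → ((e j) ∩ (univ.filter (· < j)).biUnion e).card ≤ 1)
    (j : Fin m) : ∃ v ∈ e j, ∀ i < j, v ∉ e i := by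
  have hinter : ((e j) ∩ (univ.filter (· < j)).biUnion e).card ≤ 1 := by
    rcases (j : ℕ).eq_zero_or_pos with h0 | h0
    · have hempty : univ.filter (· < j) = ∅ := by
        ext i
        simp [Fin.lt_def, h0]
      simp [hempty]
    · exact htree j h0
  have hsdiff := card_sdiff_add_card_inter (e j) ((univ.filter (· < j)).biUnion e)
  obtain ⟨v, hv⟩ : (e j \ (univ.filter (· < j)).biUnion e).Nonempty := by
    rw [← card_pos]
    have := hcard j
    omega
  simp only [mem_sdiff, mem_biUnion, mem_filter, mem_univ, true_and, not_exists, not_and] at hv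
  exact ⟨v, hv.1, hv.2⟩

theorem stmt10_general (k m n : ℕ) (hk : 2 ≤ k) (hn : n = m * (k - 1) + 1)
    (e : Fin m → Finset (Fin n))
    (hcard : ∀ j, (e j).card = k)
    (htree : ∀ j : Fin m, 0 < (j : ℕ) →
      ((e j) ∩ (univ.filter (fun i => i < j)).biUnion e).card = 1)
    (v₀ : Fin n) :
    Nat.card {x : Fin n → ZMod k //
      (∀ j : Fin m, ∑ v ∈ e j, x v = 0) ∧ x v₀ = 0} = k ^ (m * (k - 2)) := by
  choose d hd hd_notMem using exists_mem_forall_notMem_of_card_inter_biUnion_le_one e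
    (fun j => (hcard j).symm ▸ hk) (fun j hj => (htree j hj).le)
  set L := (edgeSums (R := ZMod k) e).prod (Pi.evalAddMonoidHom (fun _ => ZMod k) v₀)
  have hL : Function.Surjective L := edgeSums_prod_eval_surjective e
    (fun j => by rw [hcard, ZMod.natCast_self]) d hd hd_notMem v₀
  have hsol : {x : Fin n → ZMod k // (∀ j, ∑ v ∈ e j, x v = 0) ∧ x v₀ = 0} ≃ L.ker :=
    Equiv.subtypeEquivRight fun x => by simp [L, Prod.ext_iff, funext_iff]
  have hcount := L.card_ker_mul_card_of_surjective hL
  simp only [Nat.card_prod, Nat.card_pi, Nat.card_zmod, prod_const, card_univ,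
    Fintype.card_fin] at hcount
  have hexp : n = m * (k - 2) + (m + 1) := by
    obtain ⟨k, rfl⟩ := Nat.exists_eq_add_of_le hk
    subst hn
    simp only [Nat.add_sub_cancel_left, show 2 + k - 1 = k + 1 by omega]
    ring
  rw [Nat.card_congr hsol]
  refine Nat.eq_of_mul_eq_mul_right (pow_pos (by omega : 0 < k) (m + 1)) ?_
  rw [← pow_add, ← hexp, ← hcount, pow_succ]

/-- for a `k`-uniform hypertree `T` with `m ≥ 1` edges (edges `e 0, …,
e (m-1)`, every vertex covered, each later edge meeting the union of the earlier ones in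
exactly one vertex) on `n = m(k-1)+1` vertices and any fixed vertex `v₀`, the number of
vectors `x ∈ (ℤ/kℤ)^n` with `∑_{v ∈ e} x_v = 0` for every edge `e` and `x_{v₀} = 0` is
`k^{m(k-2)}`. -/
theorem stmt10 (k m n : ℕ) (hk : 2 ≤ k) (hm : 1 ≤ m) (hn : n = m * (k - 1) + 1)
    (e : Fin m → Finset (Fin n))
    (hcard : ∀ j, (e j).card = k)
    (hinj : Function.Injective e)
    (hcover : ∀ v : Fin n, ∃ j, v ∈ e j)
    (htree : ∀ j : Fin m, 0 < (j : ℕ) →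
      ((e j) ∩ (univ.filter (fun i => i < j)).biUnion e).card = 1)
    (v₀ : Fin n) :
    Nat.card {x : Fin n → ZMod k //
      (∀ j : Fin m, ∑ v ∈ e j, x v = 0) ∧ x v₀ = 0} = k ^ (m * (k - 2)) :=
  stmt10_general k m n hk hn e hcard htree v₀
end

section
/- Let 𝒜 be a nonnegative, combinatorial symmetric, weakly irreducible tensor of order k ≥ 2 and dimension n, let ρ be its unique eigenvalue admitting a strictly positive eigenvector, and let λ be an eigenvalue of 𝒜 with |λ| = ρ. Let x be an eigenvector of 𝒜 associated with λ, scaled so that x_1 is a positive real number. Then every entry x_i is nonzero, (x_i/|x_i|)^k = 1 for every i ∈ {1,…,n}, and for every index tuple (i_1,…,i_k) with a_{i_1…i_k} ≠ 0 the product satisfies x_{i_1}x_{i_2}⋯x_{i_k} = (λ/ρ)·|x_{i_1}x_{i_2}⋯x_{i_k}| (the uniform angle property). -/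
open Finset

/-- `(𝒜 x^{k-1})_i` for a tensor of order `k` and dimension `n` with entries `a`. -/
noncomputable def tApply {k n : ℕ} (hk : 0 < k) (a : (Fin k → Fin n) → ℂ)
    (x : Fin n → ℂ) (i : Fin n) : ℂ :=
  ∑ j : Fin k → Fin n,
    if j ⟨0, hk⟩ = i then a j * ∏ t ∈ univ.erase (⟨0, hk⟩ : Fin k), x (j t) else 0

/-- The arc relation of the directed graph `D(𝒜)`. -/
def arcRel {k n : ℕ} (hk : 0 < k) (a : (Fin k → Fin n) → ℂ) (i j : Fin n) : Prop :=
  ∃ f : Fin k → Fin n, a f ≠ 0 ∧ f ⟨0, hk⟩ = i ∧ ∃ t : Fin k, t ≠ ⟨0, hk⟩ ∧ f t = j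

/-- `𝒜` is weakly irreducible if `D(𝒜)` is strongly connected. -/
def WeaklyIrreducible {k n : ℕ} (hk : 0 < k) (a : (Fin k → Fin n) → ℂ) : Prop :=
  ∀ i j : Fin n, Relation.ReflTransGen (arcRel hk a) i j

/-- `𝒜` is combinatorial symmetric if its support is invariant under permutations of
the indices. -/
def CombSymmetricR {k n : ℕ} (a : (Fin k → Fin n) → ℝ) : Prop :=
  ∀ (σ : Equiv.Perm (Fin k)) (j : Fin k → Fin n), a j ≠ 0 → a (j ∘ σ) ≠ 0

/-!
Write `z = |x|`. The triangle inequality gives `𝒜 z^{k-1} ≥ ρ z^{[k-1]}`. Let `t y` be the smallest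
multiple of the positive eigenvector with `z ≤ t y`; where `z_i = t y_i`, the row-`i` inequality
`ρ (t y_i)^{k-1} ≤ (𝒜 z^{k-1})_i ≤ (𝒜 (t y)^{k-1})_i = ρ (t y_i)^{k-1}` is tight termwise, so
`z_j = t y_j` along every arc `i → j`, and weak irreducibility gives `z = t y`. Thus no `x_i`
vanishes and the triangle inequality is an equality in every row: each term
`a_f x_{f_2} ⋯ x_{f_k}` of row `i` has the argument of `λ x_i^{k-1}`, which yields
`x_{f_1} ⋯ x_{f_k} = (λ/ρ) (x_i/|x_i|)^k |x_{f_1} ⋯ x_{f_k}|` whenever `f_1 = i`. By combinatorial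
symmetry any index of `f` can be moved to the front, so the phase `(x_i/|x_i|)^k` is constant along
arcs, hence equal everywhere to its value `1` at the first index.
-/

open ComplexConjugate

/-- Equality case of the triangle inequality (when the sum is `0`, so is every `f i`). -/
theorem Complex.eq_div_norm_mul_norm_of_norm_sum_eq {ι : Type*} {s : Finset ι} {f : ι → ℂ}
    (h : ‖∑ j ∈ s, f j‖ = ∑ j ∈ s, ‖f j‖) {i : ι} (hi : i ∈ s) :
    f i = (∑ j ∈ s, f j) / ‖∑ j ∈ s, f j‖ * ‖f i‖ := by
  set S := ∑ j ∈ s, f j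
  rcases eq_or_ne S 0 with hS | hS
  · have : ‖f i‖ = 0 := (sum_eq_zero_iff_of_nonneg fun j _ => norm_nonneg (f j)).1
      (by rw [← h, hS, norm_zero]) i hi
    simp [norm_eq_zero.1 this]
  have hle : ∀ j ∈ s, (conj S * f j).re ≤ ‖S‖ * ‖f j‖ := fun j _ => by
    simpa using re_le_norm (conj S * f j)
  have hsum : ∑ j ∈ s, (conj S * f j).re = ∑ j ∈ s, ‖S‖ * ‖f j‖ := by
    rw [← re_sum, ← mul_sum, ← mul_sum, ← h, conj_mul']
    norm_cast
    ring
  have hre : (conj S * f i).re = ‖conj S * f i‖ := by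
    simpa using (sum_eq_sum_iff_of_le hle).1 hsum i hi
  have hreal : conj S * f i = ‖S‖ * ‖f i‖ := by
    rw [eq_coe_norm_of_nonneg (re_eq_norm.1 hre)]
    simp
  have hS' : (‖S‖ : ℂ) ≠ 0 := by exact_mod_cast norm_ne_zero_iff.2 hS
  rw [div_mul_eq_mul_div, eq_div_iff hS']
  refine mul_left_cancel₀ hS' ?_
  linear_combination S * hreal - f i * mul_conj' S

theorem Finset.eq_of_prod_eq_of_le {ι : Type*} {s : Finset ι} {f g : ι → ℝ}
    (hf : ∀ i ∈ s, 0 ≤ f i) (hg : ∀ i ∈ s, 0 < g i) (hfg : ∀ i ∈ s, f i ≤ g i)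
    (h : ∏ i ∈ s, f i = ∏ i ∈ s, g i) : ∀ i ∈ s, f i = g i := by
  have hf_pos : ∀ i ∈ s, 0 < f i := fun i hi => (hf i hi).lt_of_ne' <|
    prod_ne_zero_iff.1 (h ▸ (prod_pos hg).ne') i hi
  by_contra! hne
  obtain ⟨i, hi, hfgi⟩ := hne
  exact (prod_lt_prod hf_pos hfg ⟨i, hi, (hfg i hi).lt_of_ne hfgi⟩).ne h

section Tensor

variable {k n : ℕ} (hk : 0 < k)

theorem tApply_eq_sum_filter (a : (Fin k → Fin n) → ℂ) (x : Fin n → ℂ) (i : Fin n) :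
    tApply hk a x i = ∑ j ∈ univ.filter (· ⟨0, hk⟩ = i),
      a j * ∏ t ∈ univ.erase ⟨0, hk⟩, x (j t) :=
  (sum_filter _ _).symm

noncomputable def tApplyReal (a : (Fin k → Fin n) → ℝ) (y : Fin n → ℝ) (i : Fin n) : ℝ :=
  ∑ j ∈ univ.filter (· ⟨0, hk⟩ = i), a j * ∏ t ∈ univ.erase ⟨0, hk⟩, y (j t)

variable {hk} {a : (Fin k → Fin n) → ℝ}

theorem ofReal_tApplyReal (y : Fin n → ℝ) (i : Fin n) :
    (tApplyReal hk a y i : ℂ) = tApply hk (fun j => (a j : ℂ)) (fun i => (y i : ℂ)) i := by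
  simp [tApplyReal, tApply_eq_sum_filter]

theorem norm_tApply_term (ha : ∀ j, 0 ≤ a j) (x : Fin n → ℂ) (j : Fin k → Fin n) :
    ‖(a j : ℂ) * ∏ t ∈ univ.erase ⟨0, hk⟩, x (j t)‖ =
      a j * ∏ t ∈ univ.erase ⟨0, hk⟩, ‖x (j t)‖ := by
  rw [norm_mul, norm_prod, Complex.norm_of_nonneg (ha j)]

theorem norm_tApply_le (ha : ∀ j, 0 ≤ a j) (x : Fin n → ℂ) (i : Fin n) :
    ‖tApply hk (fun j => (a j : ℂ)) x i‖ ≤ tApplyReal hk a (fun i => ‖x i‖) i := by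
  rw [tApply_eq_sum_filter]
  exact (norm_sum_le _ _).trans_eq (sum_congr rfl fun j _ => norm_tApply_term ha x j)

theorem tApplyReal_const_mul (c : ℝ) (y : Fin n → ℝ) (i : Fin n) :
    tApplyReal hk a (fun i => c * y i) i = c ^ (k - 1) * tApplyReal hk a y i := by
  simp only [tApplyReal, mul_sum, prod_mul_distrib, prod_const, card_erase_of_mem (mem_univ _),
    card_univ, Fintype.card_fin]
  exact sum_congr rfl fun j _ => by ring

theorem eq_of_arcRel_of_tApplyReal_le (ha : ∀ j, 0 ≤ a j) {z w : Fin n → ℝ}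
    (hz : ∀ i, 0 ≤ z i) (hw : ∀ i, 0 < w i) (hzw : ∀ i, z i ≤ w i) {i j : Fin n}
    (hle : tApplyReal hk a w i ≤ tApplyReal hk a z i)
    (harc : arcRel hk (fun f => (a f : ℂ)) i j) : z j = w j := by
  obtain ⟨f, hf, rfl, s, hs, rfl⟩ := harc
  have hterm : ∀ g ∈ univ.filter (· ⟨0, hk⟩ = f ⟨0, hk⟩),
      a g * ∏ t ∈ univ.erase ⟨0, hk⟩, z (g t) ≤ a g * ∏ t ∈ univ.erase ⟨0, hk⟩, w (g t) :=
    fun g _ => mul_le_mul_of_nonneg_left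
      (prod_le_prod (fun t _ => hz _) fun t _ => hzw _) (ha g)
  have hf_eq := (sum_eq_sum_iff_of_le hterm).1 ((sum_le_sum hterm).antisymm hle) f (by simp)
  exact eq_of_prod_eq_of_le (fun t _ => hz _) (fun t _ => hw _) (fun t _ => hzw _)
    (mul_left_cancel₀ (by simpa using hf) hf_eq) s (by simp [hs])

theorem WeaklyIrreducible.forall_of_arcRel {a : (Fin k → Fin n) → ℂ}
    (hwi : WeaklyIrreducible hk a) {P : Fin n → Prop} (hP : ∀ i j, arcRel hk a i j → P i → P j)
    {i₀ : Fin n} (h₀ : P i₀) (i : Fin n) : P i := by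
  induction hwi i₀ i with
  | refl => exact h₀
  | tail _ harc ih => exact hP _ _ harc ih

theorem exists_eq_const_mul_of_le_tApplyReal (ha : ∀ j, 0 ≤ a j)
    (hwi : WeaklyIrreducible hk (fun f => (a f : ℂ))) {ρ : ℝ} {y z : Fin n → ℝ}
    (hy : ∀ i, 0 < y i) (hρ : ∀ i, tApplyReal hk a y i = ρ * y i ^ (k - 1))
    (hz : ∀ i, 0 ≤ z i) (hsub : ∀ i, ρ * z i ^ (k - 1) ≤ tApplyReal hk a z i) :
    ∃ t, ∀ i, z i = t * y i := by
  rcases isEmpty_or_nonempty (Fin n) with hn | hn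
  · exact ⟨0, isEmptyElim⟩
  obtain ⟨i₀, -, hmax⟩ := exists_max_image univ (fun i => z i / y i) univ_nonempty
  set t := z i₀ / y i₀
  have hzt : ∀ i, z i ≤ t * y i := fun i => (div_le_iff₀ (hy i)).1 (hmax i (mem_univ i))
  refine ⟨t, fun i => ?_⟩
  rcases (show 0 ≤ t from div_nonneg (hz i₀) (hy i₀).le).eq_or_lt with ht | ht
  · exact le_antisymm (hzt i) (by rw [← ht, zero_mul]; exact hz i)
  refine hwi.forall_of_arcRel (P := fun i => z i = t * y i) (fun i j harc hi => ?_)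
    (div_mul_cancel₀ _ (hy i₀).ne').symm i
  refine eq_of_arcRel_of_tApplyReal_le ha hz (fun i => mul_pos ht (hy i)) hzt ?_ harc
  calc tApplyReal hk a (fun i => t * y i) i = ρ * (t * y i) ^ (k - 1) := by
        rw [tApplyReal_const_mul, hρ, mul_pow]; ring
    _ = ρ * z i ^ (k - 1) := by rw [hi]
    _ ≤ tApplyReal hk a z i := hsub i

theorem prod_erase_eq_of_norm_tApply_eq (ha : ∀ j, 0 ≤ a j) {x : Fin n → ℂ} {i : Fin n}
    (h : ‖tApply hk (fun j => (a j : ℂ)) x i‖ = tApplyReal hk a (fun i => ‖x i‖) i)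
    {f : Fin k → Fin n} (hf : a f ≠ 0) (hfi : f ⟨0, hk⟩ = i) :
    ∏ t ∈ univ.erase ⟨0, hk⟩, x (f t) = tApply hk (fun j => (a j : ℂ)) x i /
      ‖tApply hk (fun j => (a j : ℂ)) x i‖ * ∏ t ∈ univ.erase ⟨0, hk⟩, ‖x (f t)‖ := by
  rw [tApply_eq_sum_filter] at h ⊢
  have hsum := Complex.eq_div_norm_mul_norm_of_norm_sum_eq
    (h.trans (sum_congr rfl fun g _ => (norm_tApply_term ha x g).symm)) (i := f) (by simp [hfi])
  rw [norm_tApply_term ha] at hsum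
  push_cast at hsum
  rw [mul_left_comm _ (a f : ℂ)] at hsum
  push_cast
  exact mul_left_cancel₀ (Complex.ofReal_ne_zero.2 hf) hsum

theorem prod_eq_of_eigenvector (ha : ∀ j, 0 ≤ a j) {lam : ℂ} {x : Fin n → ℂ}
    (heig : ∀ i, tApply hk (fun j => (a j : ℂ)) x i = lam * x i ^ (k - 1))
    (hnorm : ∀ i, ‖tApply hk (fun j => (a j : ℂ)) x i‖ = tApplyReal hk a (fun i => ‖x i‖) i)
    {f : Fin k → Fin n} (hf : a f ≠ 0) :
    ∏ t, x (f t) = lam / ‖lam‖ * (x (f ⟨0, hk⟩) / ‖x (f ⟨0, hk⟩)‖) ^ k * ‖∏ t, x (f t)‖ := by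
  have h := prod_erase_eq_of_norm_tApply_eq ha (hnorm _) hf rfl
  rw [heig, norm_mul, norm_pow] at h
  rw [norm_prod, ← mul_prod_erase univ (fun t => x (f t)) (mem_univ ⟨0, hk⟩),
    ← mul_prod_erase univ (fun t => ‖x (f t)‖) (mem_univ ⟨0, hk⟩), h, ← pow_sub_one_mul hk.ne']
  set x₀ := x (f ⟨0, hk⟩)
  rcases eq_or_ne x₀ 0 with hx | hx
  · simp [hx]
  rcases eq_or_ne lam 0 with hlam | hlam
  · simp [hlam]
  have : (‖x₀‖ : ℂ) ≠ 0 := by exact_mod_cast norm_ne_zero_iff.2 hx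
  have : (‖lam‖ : ℂ) ≠ 0 := by exact_mod_cast norm_ne_zero_iff.2 hlam
  push_cast
  rw [div_pow]
  field_simp

theorem eq_of_arcRel_of_prod_eq (hcs : CombSymmetricR a) {x : Fin n → ℂ} (hx : ∀ i, x i ≠ 0)
    {c : ℂ} {g : Fin n → ℂ}
    (hprod : ∀ f, a f ≠ 0 → ∏ t, x (f t) = c * g (f ⟨0, hk⟩) * ‖∏ t, x (f t)‖) {i j : Fin n}
    (harc : arcRel hk (fun f => (a f : ℂ)) i j) : g i = g j := by
  obtain ⟨f, hf, rfl, s, -, rfl⟩ := harc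
  replace hf : a f ≠ 0 := by simpa using hf
  have h₁ := hprod f hf
  have h₂ := hprod _ (hcs (Equiv.swap ⟨0, hk⟩ s) f hf)
  simp only [Function.comp_apply] at h₂
  rw [Equiv.prod_comp (Equiv.swap ⟨0, hk⟩ s) (fun t => x (f t)), Equiv.swap_apply_left] at h₂
  have hne : c * g (f ⟨0, hk⟩) * ‖∏ t, x (f t)‖ ≠ 0 := h₁ ▸ prod_ne_zero_iff.2 fun t _ => hx _
  exact mul_left_cancel₀ (left_ne_zero_of_mul (left_ne_zero_of_mul hne))
    (mul_right_cancel₀ (right_ne_zero_of_mul hne) (h₁.symm.trans h₂))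

end Tensor

/-- for a nonnegative combinatorial symmetric weakly irreducible tensor
`𝒜` with Perron–Frobenius eigenvalue `ρ`, an eigenvalue `λ` with `|λ| = ρ` and an
associated eigenvector `x` scaled so that `x_1` is a positive real: every entry of `x`
is nonzero, each `x_i/|x_i|` is a `k`-th root of unity, and the uniform angle property
`x_{i_1}⋯x_{i_k} = (λ/ρ)|x_{i_1}⋯x_{i_k}|` holds whenever `a_{i_1…i_k} ≠ 0`. -/
theorem stmt14 (k n : ℕ) (hk : 2 ≤ k) (hn : 0 < n) (a : (Fin k → Fin n) → ℝ)
    (ha : ∀ j, 0 ≤ a j)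
    (hcs : CombSymmetricR a)
    (hwi : WeaklyIrreducible (by omega : 0 < k) (fun j => (a j : ℂ)))
    (ρ : ℝ) (y : Fin n → ℝ) (hy : ∀ i, 0 < y i)
    (hρ : ∀ i, tApply (by omega : 0 < k) (fun j => (a j : ℂ)) (fun i => (y i : ℂ)) i =
      (ρ : ℂ) * (y i : ℂ) ^ (k - 1))
    (lam : ℂ) (hlam : ‖lam‖ = ρ)
    (x : Fin n → ℂ)
    (heig : ∀ i, tApply (by omega : 0 < k) (fun j => (a j : ℂ)) x i = lam * x i ^ (k - 1))
    (hscale : (x ⟨0, hn⟩).im = 0 ∧ 0 < (x ⟨0, hn⟩).re) :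
    (∀ i, x i ≠ 0) ∧
    (∀ i, (x i / (‖x i‖ : ℂ)) ^ k = 1) ∧
    (∀ j : Fin k → Fin n, a j ≠ 0 →
      (∏ t, x (j t)) = (lam / (ρ : ℂ)) * (‖∏ t, x (j t)‖ : ℂ)) := by
  have hk₀ : 0 < k := by omega
  have hρ' (i : Fin n) : tApplyReal hk₀ a y i = ρ * y i ^ (k - 1) := by
    exact_mod_cast (ofReal_tApplyReal y i).trans (hρ i)
  have hsub (i : Fin n) : ρ * ‖x i‖ ^ (k - 1) ≤ tApplyReal hk₀ a (fun i => ‖x i‖) i := by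
    simpa [heig, hlam] using norm_tApply_le ha x i
  obtain ⟨t, ht⟩ :=
    exists_eq_const_mul_of_le_tApplyReal ha hwi hy hρ' (fun i => norm_nonneg _) hsub
  have hx₀ : x ⟨0, hn⟩ = ‖x ⟨0, hn⟩‖ :=
    Complex.eq_coe_norm_of_nonneg (Complex.le_def.2 ⟨hscale.2.le, hscale.1.symm⟩)
  have hx₀_ne : x ⟨0, hn⟩ ≠ 0 := fun h => by simp [h] at hscale
  have htpos : 0 < t := pos_of_mul_pos_left ((ht _) ▸ norm_pos_iff.2 hx₀_ne) (hy _).le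
  have hxne (i : Fin n) : x i ≠ 0 := norm_pos_iff.1 ((ht i) ▸ mul_pos htpos (hy i))
  have hnorm (i : Fin n) :
      ‖tApply hk₀ (fun j => (a j : ℂ)) x i‖ = tApplyReal hk₀ a (fun i => ‖x i‖) i := by
    rw [heig, norm_mul, norm_pow, hlam, funext ht, tApplyReal_const_mul, hρ', ht i]
    ring
  have hprod := fun f (hf : a f ≠ 0) => prod_eq_of_eigenvector ha heig hnorm hf
  have hphase : ∀ i, (x i / (‖x i‖ : ℂ)) ^ k = 1 :=
    hwi.forall_of_arcRel (fun i j harc hi =>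
      eq_of_arcRel_of_prod_eq (g := fun i => (x i / ‖x i‖) ^ k) hcs hxne hprod harc ▸ hi)
      (i₀ := ⟨0, hn⟩) (by rw [← hx₀, div_self hx₀_ne, one_pow])
  refine ⟨hxne, hphase, fun f hf => ?_⟩
  have h := hprod f hf
  rwa [hphase, mul_one, hlam] at h
end

section
/- Let H be a connected k-uniform hypergraph (k ≥ 2) on n ≥ 2 vertices with at least one edge, and let ρ be the unique eigenvalue of the adjacency tensor 𝒜(H) admitting a strictly positive eigenvector. Then the projective eigenvariety 𝕍_0(ℒ(H)) of the Laplacian tensor associated with the eigenvalue 0 and the projective eigenvariety 𝕍_ρ(𝒜(H)) of the adjacency tensor associated with ρ are finite and have the same cardinality: |𝕍_0(ℒ(H))| = |𝕍_ρ(𝒜(H))|. -/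
open Finset

/-- `(𝒜(H) x^{k-1})_v = ∑_{e ∈ E(H), v ∈ e} ∏_{u ∈ e∖{v}} x_u` for a hypergraph with
edge set `E` on vertex set `Fin n`. -/
noncomputable def adjApply {n : ℕ} (E : Finset (Finset (Fin n))) (x : Fin n → ℂ)
    (v : Fin n) : ℂ :=
  ∑ e ∈ E.filter (fun e => v ∈ e), ∏ u ∈ e.erase v, x u

/-- The degree of a vertex `v`: the number of edges containing `v`. -/
def hDeg {n : ℕ} (E : Finset (Finset (Fin n))) (v : Fin n) : ℕ :=
  (E.filter (fun e => v ∈ e)).card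

/-- The action `(ℒ(H) x^{k-1})_v = d_v x_v^{k-1} - (𝒜(H) x^{k-1})_v` of the Laplacian
tensor. -/
noncomputable def lapApply {n : ℕ} (k : ℕ) (E : Finset (Finset (Fin n))) (x : Fin n → ℂ)
    (v : Fin n) : ℂ :=
  (hDeg E v : ℂ) * x v ^ (k - 1) - adjApply E x v

/-- A hypergraph is connected if any two vertices are joined by a sequence of vertices
in which consecutive vertices lie in a common edge. -/
def HConnected {n : ℕ} (E : Finset (Finset (Fin n))) : Prop :=
  ∀ u v : Fin n, Relation.ReflTransGen (fun a b => ∃ e ∈ E, a ∈ e ∧ b ∈ e) u v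

/-!
Both eigenvarieties are instances of one problem, `𝒜 x^{k-1} = μ ⊙ x^{[k-1]}` for a vertex weight
`μ` that admits a positive solution `w`: for `ℒ` take `w = 1`, `μ = d`; for `𝒜` take `w = y`,
`μ = ρ`. If `x` is any solution and `a` maximises `‖x_a / w_a‖`, the equation at `a` writes
`(x_a / w_a)^{k-1}` as a positive combination of the products `∏_{u ∈ e ∖ {a}} x_u / w_u`, none
of them longer, so all of them equal it (a point of a sphere is an extreme point of the ball). By
connectivity `‖x / w‖` is constant and `θ = x / w` satisfies `∏_{u ∈ e ∖ {v}} θ_u = θ_v^{k-1}` on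
every edge. Hence the projective classes of solutions correspond to the normalised phase vectors
`θ`, a finite set (of `k`-th roots of unity) that depends on neither `μ` nor `w`.
-/

theorem Finset.eq_of_prod_eq_prod_of_le {ι R : Type*} [CommRing R] [LinearOrder R]
    [IsStrictOrderedRing R] {s : Finset ι} {f g : ι → R} (hf : ∀ i ∈ s, 0 ≤ f i)
    (hfg : ∀ i ∈ s, f i ≤ g i) (hg : ∀ i ∈ s, 0 < g i) (h : ∏ i ∈ s, f i = ∏ i ∈ s, g i) :
    ∀ i ∈ s, f i = g i := by
  by_contra! ⟨i, hi, hne⟩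
  have hf_pos : ∀ j ∈ s, 0 < f j := fun j hj =>
    (hf j hj).lt_of_ne' (prod_ne_zero_iff.mp (h ▸ (prod_pos hg).ne') j hj)
  exact (prod_lt_prod hf_pos hfg ⟨i, hi, (hfg i hi).lt_of_ne hne⟩).ne h

open RealInnerProductSpace in
theorem eq_of_sum_smul_eq_of_norm_le {ι F : Type*} [NormedAddCommGroup F]
    [InnerProductSpace ℝ F] {s : Finset ι} {c : ι → ℝ} (hc : ∀ i ∈ s, 0 < c i) {p : ι → F}
    {q : F} (hp : ∀ i ∈ s, ‖p i‖ ≤ ‖q‖) (h : ∑ i ∈ s, c i • p i = (∑ i ∈ s, c i) • q) :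
    ∀ i ∈ s, p i = q := by
  have hle : ∀ i ∈ s, ⟪q, p i⟫ ≤ ‖q‖ ^ 2 := fun i hi =>
    (real_inner_le_norm q (p i)).trans (by rw [sq]; gcongr; exact hp i hi)
  have hsum : ∑ i ∈ s, c i * (‖q‖ ^ 2 - ⟪q, p i⟫) = 0 := by
    have := congrArg (⟪q, ·⟫) h
    simp only [inner_sum, real_inner_smul_right, real_inner_self_eq_norm_sq, sum_mul] at this
    simp only [mul_sub, sum_sub_distrib, this, sub_self]
  intro i hi
  have hi' : ⟪q, p i⟫ = ‖q‖ ^ 2 := by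
    have hterm := (sum_eq_zero_iff_of_nonneg fun j hj =>
      mul_nonneg (hc j hj).le (sub_nonneg.2 (hle j hj))).mp hsum i hi
    linarith [(mul_eq_zero.mp hterm).resolve_left (hc i hi).ne']
  have : ‖p i - q‖ ^ 2 ≤ 0 := by
    rw [norm_sub_sq_real, real_inner_comm, hi']
    nlinarith [hp i hi, norm_nonneg (p i), norm_nonneg q]
  exact sub_eq_zero.mp (norm_eq_zero.mp (by nlinarith [norm_nonneg (p i - q)]))

theorem equivalence_exists_smul {K V : Type*} [GroupWithZero K] [MulAction K V] (p : V → Prop) :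
    Equivalence (fun (x z : {x : V // p x}) => ∃ c : K, c ≠ 0 ∧ z.1 = c • x.1) where
  refl x := ⟨1, one_ne_zero, (one_smul K _).symm⟩
  symm := fun ⟨c, hc, h⟩ => ⟨c⁻¹, inv_ne_zero hc, by rw [h, inv_smul_smul₀ hc]⟩
  trans := fun ⟨c, hc, h⟩ ⟨d, hd, h'⟩ => ⟨d * c, mul_ne_zero hd hc, by rw [h', h, smul_smul]⟩

variable {n k : ℕ} {E : Finset (Finset (Fin n))}

theorem HConnected.induction (hconn : HConnected E) {P : Fin n → Prop} {v₀ : Fin n}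
    (h₀ : P v₀) (hstep : ∀ e ∈ E, ∀ a ∈ e, ∀ b ∈ e, P a → P b) (v : Fin n) : P v := by
  induction hconn v₀ v with
  | refl => exact h₀
  | tail _ hab ih =>
    obtain ⟨e, he, ha, hb⟩ := hab
    exact hstep e he _ ha _ hb ih

def IsPhase (k : ℕ) (E : Finset (Finset (Fin n))) (θ : Fin n → ℂ) : Prop :=
  ∀ e ∈ E, ∀ v ∈ e, ∏ u ∈ e.erase v, θ u = θ v ^ (k - 1)

theorem IsPhase.adjApply_mul {θ : Fin n → ℂ} (hθ : IsPhase k E θ) (x : Fin n → ℂ) (v : Fin n) :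
    adjApply E (fun u => θ u * x u) v = θ v ^ (k - 1) * adjApply E x v := by
  rw [adjApply, adjApply, mul_sum]
  refine sum_congr rfl fun e he => ?_
  rw [mem_filter] at he
  rw [prod_mul_distrib, hθ e he.1 v he.2]

theorem IsPhase.div_const (hunif : ∀ e ∈ E, e.card = k) {θ : Fin n → ℂ} (hθ : IsPhase k E θ)
    (c : ℂ) : IsPhase k E (fun u => θ u / c) := by
  intro e he v hv
  rw [prod_div_distrib, prod_const, card_erase_of_mem hv, hunif e he, hθ e he v hv, div_pow]

theorem IsPhase.pow_eq_prod (hk : 1 ≤ k) {θ : Fin n → ℂ} (hθ : IsPhase k E θ) {e : Finset (Fin n)}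
    (he : e ∈ E) {v : Fin n} (hv : v ∈ e) : θ v ^ k = ∏ u ∈ e, θ u := by
  rw [← mul_prod_erase e θ hv, hθ e he v hv, ← pow_succ', Nat.sub_add_cancel hk]

theorem IsPhase.pow_eq (hk : 1 ≤ k) (hconn : HConnected E) {θ : Fin n → ℂ}
    (hθ : IsPhase k E θ) (u v : Fin n) : θ u ^ k = θ v ^ k :=
  hconn.induction (P := fun v => θ u ^ k = θ v ^ k) rfl
    (fun e he a ha b hb hPa => by rw [hPa, hθ.pow_eq_prod hk he ha, hθ.pow_eq_prod hk he hb]) v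

def Phases (k : ℕ) (E : Finset (Finset (Fin n))) (v₀ : Fin n) : Type :=
  {θ : Fin n → ℂ // IsPhase k E θ ∧ θ v₀ = 1}

theorem finite_phases (hk : 1 ≤ k) (hconn : HConnected E) (v₀ : Fin n) :
    Finite (Phases k E v₀) := by
  let root (θ : Phases k E v₀) (v : Fin n) : Polynomial.nthRootsFinset k (1 : ℂ) :=
    ⟨θ.1 v, (Polynomial.mem_nthRootsFinset hk 1).mpr
      (by rw [θ.2.1.pow_eq hk hconn v v₀, θ.2.2, one_pow])⟩
  refine Finite.of_injective root fun θ θ' h => Subtype.ext (funext fun v => ?_)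
  exact congrArg Subtype.val (congrFun h v)

theorem adjApply_mul_ofReal (z : Fin n → ℂ) (w : Fin n → ℝ) (a : Fin n) :
    adjApply E (fun u => z u * w u) a =
      ∑ e ∈ E.filter (a ∈ ·), (∏ u ∈ e.erase a, w u) • ∏ u ∈ e.erase a, z u := by
  simp only [adjApply, prod_mul_distrib, Complex.real_smul, Complex.ofReal_prod, mul_comm]

theorem adjApply_ofReal (w : Fin n → ℝ) (a : Fin n) :
    adjApply E (fun u => (w u : ℂ)) a =
      ((∑ e ∈ E.filter (a ∈ ·), ∏ u ∈ e.erase a, w u : ℝ) : ℂ) := by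
  simp only [adjApply, Complex.ofReal_sum, Complex.ofReal_prod]

theorem prod_erase_eq_pow_of_norm_le (hunif : ∀ e ∈ E, e.card = k) {w : Fin n → ℝ}
    (hw : ∀ u, 0 < w u) {a : Fin n} {μ : ℂ}
    (hμ : adjApply E (fun u => (w u : ℂ)) a = μ * (w a : ℂ) ^ (k - 1)) {z : Fin n → ℂ}
    (hz : adjApply E (fun u => z u * w u) a = μ * (z a * w a) ^ (k - 1))
    (hmax : ∀ u, ‖z u‖ ≤ ‖z a‖) {e : Finset (Fin n)} (he : e ∈ E) (hae : a ∈ e) :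
    ∏ u ∈ e.erase a, z u = z a ^ (k - 1) := by
  have hcomb : ∑ e ∈ E.filter (a ∈ ·), (∏ u ∈ e.erase a, w u) • ∏ u ∈ e.erase a, z u =
      (∑ e ∈ E.filter (a ∈ ·), ∏ u ∈ e.erase a, w u) • z a ^ (k - 1) := by
    rw [← adjApply_mul_ofReal, hz, Complex.real_smul, ← adjApply_ofReal, hμ]
    ring
  refine eq_of_sum_smul_eq_of_norm_le (fun e _ => prod_pos fun u _ => hw u) (fun e he => ?_)
    hcomb e (mem_filter.2 ⟨he, hae⟩)
  obtain ⟨he, hae⟩ := mem_filter.1 he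
  calc ‖∏ u ∈ e.erase a, z u‖ = ∏ u ∈ e.erase a, ‖z u‖ := norm_prod _ _
    _ ≤ ∏ u ∈ e.erase a, ‖z a‖ := prod_le_prod (fun u _ => norm_nonneg _) fun u _ => hmax u
    _ = ‖z a ^ (k - 1)‖ := by rw [prod_const, card_erase_of_mem hae, hunif e he, norm_pow]

theorem norm_eq_of_prod_erase_eq_pow (hunif : ∀ e ∈ E, e.card = k) {z : Fin n → ℂ} {a : Fin n}
    (hmax : ∀ u, ‖z u‖ ≤ ‖z a‖) (ha : z a ≠ 0) {e : Finset (Fin n)} (he : e ∈ E) (hae : a ∈ e)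
    (h : ∏ u ∈ e.erase a, z u = z a ^ (k - 1)) : ∀ u ∈ e, ‖z u‖ = ‖z a‖ := by
  intro u hu
  rcases eq_or_ne u a with rfl | hua
  · rfl
  refine eq_of_prod_eq_prod_of_le (fun _ _ => norm_nonneg _) (fun u _ => hmax u)
    (fun _ _ => norm_pos_iff.2 ha) ?_ u (mem_erase.2 ⟨hua, hu⟩)
  rw [← norm_prod, h, norm_pow, prod_const, card_erase_of_mem hae, hunif e he]

theorem isPhase_div_of_eigen (hunif : ∀ e ∈ E, e.card = k) (hconn : HConnected E)
    {w : Fin n → ℝ} (hw : ∀ u, 0 < w u) {μ : Fin n → ℂ}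
    (hμ : ∀ v, adjApply E (fun u => (w u : ℂ)) v = μ v * (w v : ℂ) ^ (k - 1))
    {x : Fin n → ℂ} (hx : x ≠ 0) (heig : ∀ v, adjApply E x v = μ v * x v ^ (k - 1)) :
    IsPhase k E (fun v => x v / w v) := by
  set z : Fin n → ℂ := fun v => x v / w v
  have hzw : (fun v => z v * w v) = x :=
    funext fun v => div_mul_cancel₀ _ (Complex.ofReal_ne_zero.2 (hw v).ne')
  have hz : ∀ v, adjApply E (fun u => z u * w u) v = μ v * (z v * w v) ^ (k - 1) := by
    intro v
    rw [hzw, congrFun hzw v]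
    exact heig v
  have : Nonempty (Fin n) := let ⟨v, _⟩ := Function.ne_iff.1 hx; ⟨v⟩
  obtain ⟨a, hmax⟩ := (Finite.exists_max (‖z ·‖) : ∃ a : Fin n, ∀ u, ‖z u‖ ≤ ‖z a‖)
  have ha : z a ≠ 0 := by
    intro ha
    refine hx (hzw ▸ funext fun v => ?_)
    have hv := hmax v
    rw [ha, norm_zero, norm_le_zero_iff] at hv
    simp [hv]
  have hnorm : ∀ v, ‖z v‖ = ‖z a‖ := by
    refine hconn.induction (P := fun v => ‖z v‖ = ‖z a‖) rfl fun e he b hb c hc hb' => ?_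
    have hmaxb : ∀ u, ‖z u‖ ≤ ‖z b‖ := hb' ▸ hmax
    have hzb : z b ≠ 0 := norm_ne_zero_iff.1 (hb' ▸ norm_ne_zero_iff.2 ha)
    exact hb' ▸ norm_eq_of_prod_erase_eq_pow hunif hmaxb hzb he hb
      (prod_erase_eq_pow_of_norm_le hunif hw (hμ b) (hz b) hmaxb he hb) c hc
  intro e he v hv
  exact prod_erase_eq_pow_of_norm_le hunif hw (hμ v) (hz v)
    (fun u => ((hnorm u).trans (hnorm v).symm).le) he hv

abbrev ProjClasses (p : (Fin n → ℂ) → Prop) : Type :=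
  Quot (fun (x z : {x : Fin n → ℂ // p x}) => ∃ c : ℂ, c ≠ 0 ∧ z.1 = c • x.1)

theorem bijective_phases_projClasses (hk : 1 ≤ k) (hunif : ∀ e ∈ E, e.card = k)
    (hconn : HConnected E) {w : Fin n → ℝ} (hw : ∀ u, 0 < w u) {μ : Fin n → ℂ}
    (hμ : ∀ v, adjApply E (fun u => (w u : ℂ)) v = μ v * (w v : ℂ) ^ (k - 1)) (v₀ : Fin n)
    (p : (Fin n → ℂ) → Prop)
    (hp : ∀ x, p x ↔ x ≠ 0 ∧ ∀ v, adjApply E x v = μ v * x v ^ (k - 1)) :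
    ∃ F : Phases k E v₀ → ProjClasses p, F.Bijective := by
  have hw₀ : ∀ v, (w v : ℂ) ≠ 0 := fun v => Complex.ofReal_ne_zero.2 (hw v).ne'
  have hmem (θ : Phases k E v₀) : p (fun v => θ.1 v * w v) := by
    refine (hp _).2 ⟨fun h => hw₀ v₀ ?_, fun v => ?_⟩
    · simpa [θ.2.2] using congrFun h v₀
    · rw [θ.2.1.adjApply_mul, hμ v]
      ring
  refine ⟨fun θ => Quot.mk _ ⟨_, hmem θ⟩, fun θ θ' h => ?_, Quot.ind fun x => ?_⟩
  · obtain ⟨c, -, hc⟩ := (equivalence_exists_smul p).eqvGen_iff.1 (Quot.eqvGen_exact h)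
    have hc₁ : c = 1 := by
      have h₀ := congrFun hc v₀
      simp only [Pi.smul_apply, smul_eq_mul, θ.2.2, θ'.2.2, one_mul] at h₀
      exact (mul_eq_right₀ (hw₀ v₀)).1 h₀.symm
    refine Subtype.ext (funext fun v => mul_right_cancel₀ (hw₀ v) ?_)
    simpa [hc₁] using (congrFun hc v).symm
  · obtain ⟨hx, heig⟩ := (hp x.1).1 x.2
    set z : Fin n → ℂ := fun v => x.1 v / w v
    have hz : IsPhase k E z := isPhase_div_of_eigen hunif hconn hw hμ hx heig
    have hz₀ : z v₀ ≠ 0 := by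
      obtain ⟨v, hv⟩ := Function.ne_iff.1 hx
      refine (pow_ne_zero_iff (by omega : k ≠ 0)).1 (hz.pow_eq hk hconn v₀ v ▸ ?_)
      exact pow_ne_zero _ (div_ne_zero hv (hw₀ v))
    refine ⟨⟨fun v => z v / z v₀, hz.div_const hunif _, div_self hz₀⟩,
      Quot.sound ⟨z v₀, hz₀, funext fun v => ?_⟩⟩
    rw [Pi.smul_apply, smul_eq_mul, ← mul_assoc, mul_div_cancel₀ _ hz₀]
    exact (div_mul_cancel₀ _ (hw₀ v)).symm

theorem stmt15_general (k n : ℕ) (hk : 2 ≤ k) (hn : 2 ≤ n)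
    (E : Finset (Finset (Fin n))) (hunif : ∀ e ∈ E, e.card = k)
    (hconn : HConnected E)
    (ρ : ℝ) (y : Fin n → ℝ) (hy : ∀ i, 0 < y i)
    (hρ : ∀ v, adjApply E (fun i => (y i : ℂ)) v = (ρ : ℂ) * (y v : ℂ) ^ (k - 1)) :
    Finite (Quot (fun
        (x z : {x : Fin n → ℂ // x ≠ 0 ∧
          ∀ v, lapApply k E x v = 0 * x v ^ (k - 1)}) =>
      ∃ c : ℂ, c ≠ 0 ∧ z.1 = c • x.1)) ∧
    Finite (Quot (fun
        (x z : {x : Fin n → ℂ // x ≠ 0 ∧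
          ∀ v, adjApply E x v = (ρ : ℂ) * x v ^ (k - 1)}) =>
      ∃ c : ℂ, c ≠ 0 ∧ z.1 = c • x.1)) ∧
    Nat.card (Quot (fun
        (x z : {x : Fin n → ℂ // x ≠ 0 ∧
          ∀ v, lapApply k E x v = 0 * x v ^ (k - 1)}) =>
      ∃ c : ℂ, c ≠ 0 ∧ z.1 = c • x.1)) =
    Nat.card (Quot (fun
        (x z : {x : Fin n → ℂ // x ≠ 0 ∧
          ∀ v, adjApply E x v = (ρ : ℂ) * x v ^ (k - 1)}) =>
      ∃ c : ℂ, c ≠ 0 ∧ z.1 = c • x.1)) := by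
  have v₀ : Fin n := ⟨0, by omega⟩
  obtain ⟨FL, hFL⟩ := bijective_phases_projClasses (by omega) hunif hconn (w := fun _ => 1)
    (fun _ => one_pos) (μ := fun v => hDeg E v) (fun v => by simp [adjApply, hDeg]) v₀
    (fun x => x ≠ 0 ∧ ∀ v, lapApply k E x v = 0 * x v ^ (k - 1))
    fun x => by simp only [lapApply, zero_mul, sub_eq_zero, eq_comm (a := (hDeg E _ : ℂ) * _)]
  obtain ⟨FA, hFA⟩ := bijective_phases_projClasses (by omega) hunif hconn hy
    (μ := fun _ => ρ) hρ v₀ _ fun x => Iff.rfl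
  have := finite_phases (k := k) (by omega) hconn v₀
  exact ⟨.of_surjective FL hFL.2, .of_surjective FA hFA.2,
    (Nat.card_eq_of_bijective FL hFL).symm.trans (Nat.card_eq_of_bijective FA hFA)⟩

/-- for a connected `k`-uniform hypergraph `H` with Perron–Frobenius
eigenvalue `ρ` of the adjacency tensor, the projective eigenvarieties `𝕍_0(ℒ(H))` and
`𝕍_ρ(𝒜(H))` (eigenvectors up to nonzero complex scalars) are finite and have the same
cardinality. -/
theorem stmt15 (k n : ℕ) (hk : 2 ≤ k) (hn : 2 ≤ n)
    (E : Finset (Finset (Fin n))) (hunif : ∀ e ∈ E, e.card = k) (hne : E.Nonempty)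
    (hconn : HConnected E)
    (ρ : ℝ) (y : Fin n → ℝ) (hy : ∀ i, 0 < y i)
    (hρ : ∀ v, adjApply E (fun i => (y i : ℂ)) v = (ρ : ℂ) * (y v : ℂ) ^ (k - 1)) :
    Finite (Quot (fun
        (x z : {x : Fin n → ℂ // x ≠ 0 ∧
          ∀ v, lapApply k E x v = 0 * x v ^ (k - 1)}) =>
      ∃ c : ℂ, c ≠ 0 ∧ z.1 = c • x.1)) ∧
    Finite (Quot (fun
        (x z : {x : Fin n → ℂ // x ≠ 0 ∧
          ∀ v, adjApply E x v = (ρ : ℂ) * x v ^ (k - 1)}) =>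
      ∃ c : ℂ, c ≠ 0 ∧ z.1 = c • x.1)) ∧
    Nat.card (Quot (fun
        (x z : {x : Fin n → ℂ // x ≠ 0 ∧
          ∀ v, lapApply k E x v = 0 * x v ^ (k - 1)}) =>
      ∃ c : ℂ, c ≠ 0 ∧ z.1 = c • x.1)) =
    Nat.card (Quot (fun
        (x z : {x : Fin n → ℂ // x ≠ 0 ∧
          ∀ v, adjApply E x v = (ρ : ℂ) * x v ^ (k - 1)}) =>
      ∃ c : ℂ, c ≠ 0 ∧ z.1 = c • x.1)) :=
  stmt15_general k n hk hn E hunif hconn ρ y hy hρ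
end
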